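/- B(G) = 0 if and only if G is a complete graph or an edgeless (empty) graph. -/

import Mathlib

open Finset

variable {V : Type*}

/-- A proper coloring given as a function to ℕ. -/
def IsProperColoring (G : SimpleGraph V) (c : V → ℕ) : Prop :=
  ∀ ⦃u v⦄, G.Adj u v → c u ≠ c v

variable [Fintype V] [DecidableEq V]

/-- Two colorings use every color the same number of times. -/
def SameColorCounts (c c' : V → ℕ) : Prop :=
  ∀ k : ℕ, (univ.filter fun v => c v = k).card = (univ.filter fun v => c' v = k).card

/-- The number of vertices on which two colorings differ. -/
def recolorCount (c c' : V → ℕ) : ℕ := (univ.filter fun v => c v ≠ c' v).card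

/-- The ℕ-valued chromatic number. -/
noncomputable def chromNum (G : SimpleGraph V) : ℕ := G.chromaticNumber.toNat

/-- A proper coloring of `G` using exactly `χ(G)` colors. -/
noncomputable def IsOptimalColoring (G : SimpleGraph V) (f : V → ℕ) : Prop :=
  IsProperColoring G f ∧ (univ.image f).card = chromNum G

/-- The villainy of a coloring `c`: the least number of vertices that must be
recolored to obtain a proper coloring using each color as often as `c` does. -/
noncomputable def colVillainy (G : SimpleGraph V) (c : V → ℕ) : ℕ :=
  sInf {n | ∃ c', IsProperColoring G c' ∧ SameColorCounts c c' ∧ recolorCount c c' = n}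

/-- `c` is a permutation of the coloring `f`. -/
def IsPermutationOf (c f : V → ℕ) : Prop := ∃ σ : Equiv.Perm V, c = f ∘ σ

/-- The villainy of `G`: the maximum villainy over all permutations of optimal
proper colorings of `G`. -/
noncomputable def villainy (G : SimpleGraph V) : ℕ :=
  sSup {n | ∃ f c, IsOptimalColoring G f ∧ IsPermutationOf c f ∧ colVillainy G c = n}


/-! A proper coloring has villainy 0, and any other permutation `f ∘ σ` of a proper coloring `f`
has positive villainy, since `f` itself is a proper coloring with the same color counts.
Hence `B(G) = 0` exactly when every permutation of every optimal coloring is proper. If `G` has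
an edge `uv`, a permutation sending two vertices of equal color to `u` and `v` is improper, so
every optimal coloring is injective; then `χ(G) = |V|`, which forces `G` to be complete. -/

lemma Equiv.Perm.exists_apply_eq_and_apply_eq {α : Type*} [DecidableEq α] {u v a b : α}
    (huv : u ≠ v) (hab : a ≠ b) : ∃ σ : Equiv.Perm α, σ u = a ∧ σ v = b := by
  set τ := Equiv.swap u a
  have hτv : τ v ≠ a := by
    rw [← Equiv.swap_apply_left u a]
    exact τ.injective.ne huv.symm
  refine ⟨τ.trans (Equiv.swap (τ v) b), ?_, Equiv.swap_apply_left _ _⟩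
  simp only [Equiv.trans_apply, τ, Equiv.swap_apply_left]
  exact Equiv.swap_apply_of_ne_of_ne hτv.symm hab

section

variable {W : Type*} {G : SimpleGraph W} {f : W → ℕ}

lemma isProperColoring_top_iff : IsProperColoring (⊤ : SimpleGraph W) f ↔ f.Injective := by
  refine ⟨fun hf u v huv => ?_, fun hf u v huv => hf.ne huv.ne⟩
  by_contra hne
  exact hf ((SimpleGraph.top_adj u v).2 hne) huv

lemma isProperColoring_bot (f : W → ℕ) : IsProperColoring (⊥ : SimpleGraph W) f :=
  fun _ _ h => h.elim

lemma injective_of_forall_isProperColoring_comp_perm [DecidableEq W] {u v : W} (huv : G.Adj u v)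
    (h : ∀ σ : Equiv.Perm W, IsProperColoring G (f ∘ σ)) : f.Injective := by
  intro a b hfab
  by_contra hab
  obtain ⟨σ, hσu, hσv⟩ := Equiv.Perm.exists_apply_eq_and_apply_eq huv.ne hab
  exact h σ huv (by simp [hσu, hσv, hfab])

variable [Fintype W]

lemma IsProperColoring.colorable (hf : IsProperColoring G f) : G.Colorable #(univ.image f) := by
  let C : G.Coloring (univ.image f) :=
    SimpleGraph.Coloring.mk (fun v => ⟨f v, mem_image_of_mem f (mem_univ v)⟩)
      fun h heq => hf h (congrArg Subtype.val heq)
  simpa using C.colorable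

lemma IsProperColoring.chromNum_le (hf : IsProperColoring G f) : chromNum G ≤ #(univ.image f) := by
  simpa [chromNum] using ENat.toNat_le_toNat hf.colorable.chromaticNumber_le (by simp)

lemma exists_isOptimalColoring (G : SimpleGraph W) : ∃ f, IsOptimalColoring G f := by
  obtain ⟨C⟩ := G.colorable_chromaticNumber_of_fintype
  have hC : IsProperColoring G fun v => (C v : ℕ) := fun _ _ h heq => C.valid h (Fin.ext heq)
  refine ⟨_, hC, le_antisymm ?_ hC.chromNum_le⟩
  calc #(univ.image fun v => (C v : ℕ)) ≤ #(range (chromNum G)) :=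
        card_le_card fun _ hk => by
          obtain ⟨v, -, rfl⟩ := mem_image.1 hk
          exact mem_range.2 (C v).2
    _ = chromNum G := card_range _

lemma IsOptimalColoring.eq_top_of_injective (hf : IsOptimalColoring G f) (hinj : f.Injective) :
    G = ⊤ := by
  have hχ : chromNum G = Fintype.card W := by
    rw [← hf.2, card_image_of_injective _ hinj, card_univ]
  refine SimpleGraph.eq_top_of_chromaticNumber_eq_card ?_
  rw [← hχ, chromNum, ENat.natCast_toNat]
  exact SimpleGraph.chromaticNumber_ne_top_iff_exists.2 ⟨_, G.colorable_of_fintype⟩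

lemma sameColorCounts_comp_perm (f : W → ℕ) (σ : Equiv.Perm W) : SameColorCounts (f ∘ σ) f :=
  fun _ => card_bij (fun v _ => σ v) (by simp) (fun _ _ _ _ h => σ.injective h)
    fun b hb => ⟨σ.symm b, by simpa using hb, by simp⟩

lemma recolorCount_eq_zero_iff {c c' : W → ℕ} : recolorCount c c' = 0 ↔ c = c' := by
  simp [recolorCount, funext_iff]

lemma colVillainy_le_recolorCount {c c' : W → ℕ} (hc' : IsProperColoring G c')
    (hcc' : SameColorCounts c c') : colVillainy G c ≤ recolorCount c c' := by
  unfold colVillainy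
  exact Nat.sInf_le ⟨c', hc', hcc', rfl⟩

lemma colVillainy_eq_zero_iff {c c' : W → ℕ} (hc' : IsProperColoring G c')
    (hcc' : SameColorCounts c c') : colVillainy G c = 0 ↔ IsProperColoring G c := by
  refine ⟨fun h => ?_, fun h =>
    Nat.sInf_eq_zero.2 (.inl ⟨c, h, fun _ => rfl, recolorCount_eq_zero_iff.2 rfl⟩)⟩
  rcases Nat.sInf_eq_zero.1 h with ⟨c'', hc'', -, hzero⟩ | hempty
  · rwa [recolorCount_eq_zero_iff.1 hzero]
  · exact (Set.eq_empty_iff_forall_notMem.1 hempty _ ⟨c', hc', hcc', rfl⟩).elim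

lemma villainy_eq_zero_iff_forall_isProperColoring_comp_perm (G : SimpleGraph W) :
    villainy G = 0 ↔
      ∀ (f : W → ℕ) (σ : Equiv.Perm W), IsOptimalColoring G f → IsProperColoring G (f ∘ σ) := by
  have hbdd : BddAbove {n | ∃ f c, IsOptimalColoring G f ∧ IsPermutationOf c f ∧
      colVillainy G c = n} := by
    refine ⟨Fintype.card W, ?_⟩
    rintro _ ⟨f, _, hf, ⟨σ, rfl⟩, rfl⟩
    exact (colVillainy_le_recolorCount hf.1 (sameColorCounts_comp_perm f σ)).trans
      (card_filter_le _ _)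
  rw [villainy, ← Nat.le_zero]
  refine ⟨fun h f σ hf => ?_, fun h => csSup_le' ?_⟩
  · rw [← colVillainy_eq_zero_iff hf.1 (sameColorCounts_comp_perm f σ), ← Nat.le_zero]
    exact (le_csSup hbdd ⟨f, _, hf, ⟨σ, rfl⟩, rfl⟩).trans h
  · rintro _ ⟨f, _, hf, ⟨σ, rfl⟩, rfl⟩
    exact ((colVillainy_eq_zero_iff hf.1 (sameColorCounts_comp_perm f σ)).2 (h f σ hf)).le

end

theorem villainy_eq_zero_iff (G : SimpleGraph V) :
    villainy G = 0 ↔ G = ⊤ ∨ G = ⊥ := by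
  rw [villainy_eq_zero_iff_forall_isProperColoring_comp_perm]
  constructor
  · intro h
    refine or_iff_not_imp_right.2 fun hbot => ?_
    obtain ⟨u, v, huv⟩ := SimpleGraph.ne_bot_iff_exists_adj.1 hbot
    obtain ⟨f, hf⟩ := exists_isOptimalColoring G
    exact hf.eq_top_of_injective (injective_of_forall_isProperColoring_comp_perm huv (h f · hf))
  · rintro (rfl | rfl) f σ hf
    · exact isProperColoring_top_iff.2 ((isProperColoring_top_iff.1 hf.1).comp σ.injective)
    · exact isProperColoring_bot _
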